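/- For the penalized objective h(Σ) = (c/2)(log det Σ + tr(Σ⁻¹ S)) + (η/2)(tr(Σ⁻¹ T) − log det(Σ⁻¹ T) − m) with c > 0, η > 0, S symmetric positive semidefinite, T symmetric positive definite, the unique minimizer over SPD matrices Σ is Σ* = (cS + ηT)/(c + η). -/

import Mathlib

/-!
With `D(Σ, A) := tr(Σ⁻¹A) − log det(Σ⁻¹A) − m`, a direct computation gives
`h(Σ) − h(Σ*) = (c + η)/2 · D(Σ, Σ*)`, since both `tr(Σ⁻¹ S)` and `tr(Σ⁻¹ T)` combine into
`(c + η) tr(Σ⁻¹ Σ*)`. Writing `Σ = B²` with `B = Σ^{1/2}`, the matrix `Σ⁻¹A` is similar to the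
positive definite `B⁻¹AB⁻¹`, so `D(Σ, A) = ∑ᵢ (λᵢ − log λᵢ − 1)` over its eigenvalues `λᵢ > 0`.
Each summand is `≥ 0` with equality iff `λᵢ = 1`, so `D(Σ, A) ≥ 0` with equality iff `Σ = A`.
-/

namespace Matrix

variable {n : Type*} [Fintype n] [DecidableEq n]

noncomputable def traceSubLogDet (M : Matrix n n ℝ) : ℝ :=
  M.trace - Real.log M.det - Fintype.card n

@[simp]
lemma traceSubLogDet_one : (1 : Matrix n n ℝ).traceSubLogDet = 0 := by
  simp [traceSubLogDet]

lemma traceSubLogDet_inv_mul_mul {P : Matrix n n ℝ} (hP : IsUnit P) (M : Matrix n n ℝ) :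
    (P⁻¹ * M * P).traceSubLogDet = M.traceSubLogDet := by
  rw [traceSubLogDet, traceSubLogDet, det_conj' hP, trace_mul_cycle,
    mul_nonsing_inv _ ((isUnit_iff_isUnit_det P).1 hP), Matrix.one_mul]

lemma PosDef.traceSubLogDet_eq_sum {M : Matrix n n ℝ} (hM : M.PosDef) :
    M.traceSubLogDet = ∑ i, (hM.1.eigenvalues i - Real.log (hM.1.eigenvalues i) - 1) := by
  simp only [traceSubLogDet, hM.1.trace_eq_sum_eigenvalues, hM.1.det_eq_prod_eigenvalues,
    RCLike.ofReal_real_eq_id, id, Real.log_prod fun i _ => (hM.eigenvalues_pos i).ne']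
  simp [Finset.sum_sub_distrib]

lemma IsHermitian.eq_one_of_eigenvalues_eq_one {𝕜 : Type*} [RCLike 𝕜] {M : Matrix n n 𝕜}
    (hM : M.IsHermitian) (h : ∀ i, hM.eigenvalues i = 1) : M = 1 := by
  have hdiag : (RCLike.ofReal ∘ hM.eigenvalues : n → 𝕜) = 1 := funext fun i => by simp [h i]
  rw [hM.spectral_theorem, hdiag, Pi.one_def, diagonal_one, map_one]

lemma PosDef.traceSubLogDet_nonneg {M : Matrix n n ℝ} (hM : M.PosDef) :
    0 ≤ M.traceSubLogDet := by
  rw [hM.traceSubLogDet_eq_sum]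
  exact Finset.sum_nonneg fun i _ => by
    linarith [Real.log_le_sub_one_of_pos (hM.eigenvalues_pos i)]

lemma PosDef.eq_one_of_traceSubLogDet_eq_zero {M : Matrix n n ℝ} (hM : M.PosDef)
    (h : M.traceSubLogDet = 0) : M = 1 := by
  refine hM.1.eq_one_of_eigenvalues_eq_one fun i => ?_
  rw [hM.traceSubLogDet_eq_sum, Finset.sum_eq_zero_iff_of_nonneg fun i _ => by
    linarith [Real.log_le_sub_one_of_pos (hM.eigenvalues_pos i)]] at h
  by_contra hne
  linarith [Real.log_lt_sub_one_of_pos (hM.eigenvalues_pos i) hne, h i (Finset.mem_univ i)]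

open scoped MatrixOrder in
lemma PosDef.exists_inv_mul_eq_conj {Sig A : Matrix n n ℝ} (hSig : Sig.PosDef) (hA : A.PosDef) :
    ∃ P M : Matrix n n ℝ, IsUnit P ∧ M.PosDef ∧ Sig⁻¹ * A = P⁻¹ * M * P := by
  set B := CFC.sqrt Sig
  have hB : IsUnit B := (CFC.isUnit_sqrt_iff Sig hSig.posSemidef.nonneg).2 hSig.isUnit
  have hBB : B * B = Sig := CFC.sqrt_mul_sqrt_self Sig hSig.posSemidef.nonneg
  have hBinv : star B⁻¹ = B⁻¹ := (nonneg_iff_posSemidef.1 (CFC.sqrt_nonneg Sig)).isHermitian.inv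
  refine ⟨B, B⁻¹ * A * B⁻¹, hB, ?_, ?_⟩
  · simpa only [hBinv] using
      (IsUnit.posDef_star_left_conjugate_iff (isUnit_nonsing_inv_iff.2 hB)).2 hA
  · rw [← hBB, mul_inv_rev, Matrix.mul_assoc, Matrix.mul_assoc, Matrix.mul_assoc,
      nonsing_inv_mul _ ((isUnit_iff_isUnit_det B).1 hB), Matrix.mul_one]

lemma PosDef.traceSubLogDet_inv_mul_nonneg {Sig A : Matrix n n ℝ} (hSig : Sig.PosDef)
    (hA : A.PosDef) : 0 ≤ (Sig⁻¹ * A).traceSubLogDet := by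
  obtain ⟨P, M, hP, hM, hsim⟩ := hSig.exists_inv_mul_eq_conj hA
  rw [hsim, traceSubLogDet_inv_mul_mul hP]
  exact hM.traceSubLogDet_nonneg

lemma inv_mul_eq_one_iff {α : Type*} [CommRing α] {A B : Matrix n n α} (hA : IsUnit A.det) : A⁻¹ * B = 1 ↔ A = B := by
  refine ⟨fun h => ?_, fun h => h ▸ nonsing_inv_mul A hA⟩
  rw [← mul_nonsing_inv_cancel_left A B hA, h, Matrix.mul_one]

lemma PosDef.traceSubLogDet_inv_mul_eq_zero_iff {Sig A : Matrix n n ℝ} (hSig : Sig.PosDef)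
    (hA : A.PosDef) : (Sig⁻¹ * A).traceSubLogDet = 0 ↔ Sig = A := by
  have hSigdet : IsUnit Sig.det := hSig.det_pos.ne'.isUnit
  refine ⟨fun h => ?_, fun h => by rw [h, nonsing_inv_mul A (h ▸ hSigdet), traceSubLogDet_one]⟩
  obtain ⟨P, M, hP, hM, hsim⟩ := hSig.exists_inv_mul_eq_conj hA
  rw [hsim, traceSubLogDet_inv_mul_mul hP] at h
  rw [← inv_mul_eq_one_iff hSigdet, hsim, hM.eq_one_of_traceSubLogDet_eq_zero h, Matrix.mul_one,
    nonsing_inv_mul _ ((isUnit_iff_isUnit_det P).1 hP)]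

lemma log_det_inv_mul {A B : Matrix n n ℝ} (hA : A.det ≠ 0) (hB : B.det ≠ 0) :
    Real.log (A⁻¹ * B).det = Real.log B.det - Real.log A.det := by
  rw [det_mul, det_nonsing_inv, Ring.inverse_eq_inv, Real.log_mul (inv_ne_zero hA) hB,
    Real.log_inv, neg_add_eq_sub]

end Matrix

open Matrix

section PenalizedObjective

variable {n : Type*} [Fintype n] [DecidableEq n]

noncomputable def penalizedObjective (c η : ℝ) (S T Sig : Matrix n n ℝ) : ℝ :=
  (c / 2) * (Real.log Sig.det + (Sig⁻¹ * S).trace) + (η / 2) * (Sig⁻¹ * T).traceSubLogDet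

lemma penalizedObjective_eq {c η : ℝ} (hcη : c + η ≠ 0) {S T Sig : Matrix n n ℝ}
    (hSig : Sig.det ≠ 0) (hT : T.det ≠ 0) :
    penalizedObjective c η S T Sig =
      ((c + η) / 2) * (Real.log Sig.det + (Sig⁻¹ * ((c + η)⁻¹ • (c • S + η • T))).trace)
        - (η / 2) * (Real.log T.det + Fintype.card n) := by
  rw [penalizedObjective, traceSubLogDet, log_det_inv_mul hSig hT, Matrix.mul_smul,
    Matrix.mul_add, Matrix.mul_smul, Matrix.mul_smul, trace_smul, trace_add, trace_smul,
    trace_smul, smul_eq_mul, smul_eq_mul, smul_eq_mul]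
  field_simp
  ring

lemma penalizedObjective_sub_eq {c η : ℝ} (hcη : c + η ≠ 0) {S T Sig : Matrix n n ℝ}
    (hSig : Sig.det ≠ 0) (hT : T.det ≠ 0) (hstar : ((c + η)⁻¹ • (c • S + η • T)).det ≠ 0) :
    penalizedObjective c η S T Sig - penalizedObjective c η S T ((c + η)⁻¹ • (c • S + η • T)) =
      ((c + η) / 2) * (Sig⁻¹ * ((c + η)⁻¹ • (c • S + η • T))).traceSubLogDet := by
  rw [penalizedObjective_eq hcη hSig hT, penalizedObjective_eq hcη hstar hT,
    nonsing_inv_mul _ hstar.isUnit, traceSubLogDet, log_det_inv_mul hSig hstar, trace_one]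
  ring

end PenalizedObjective

theorem penalized_objective_unique_minimizer_general
    (m : ℕ) (c η : ℝ) (hc : 0 < c) (hη : 0 < η)
    (S T : Matrix (Fin m) (Fin m) ℝ) (hS : S.PosSemidef) (hT : T.PosDef) :
    let h : Matrix (Fin m) (Fin m) ℝ → ℝ := fun Sig =>
      (c / 2) * (Real.log Sig.det + (Sig⁻¹ * S).trace) +
      (η / 2) * ((Sig⁻¹ * T).trace - Real.log (Sig⁻¹ * T).det - m)
    let Sigstar : Matrix (Fin m) (Fin m) ℝ := (c + η)⁻¹ • (c • S + η • T)
    Sigstar.PosDef ∧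
    (∀ Sig : Matrix (Fin m) (Fin m) ℝ, Sig.PosDef → h Sigstar ≤ h Sig) ∧
    (∀ Sig : Matrix (Fin m) (Fin m) ℝ, Sig.PosDef →
      (h Sig = h Sigstar ↔ Sig = Sigstar)) := by
  intro h Sigstar
  have hcη : 0 < c + η := by linarith
  have hstar : Sigstar.PosDef :=
    (PosDef.posSemidef_add (hS.smul hc.le) (hT.smul hη)).smul (inv_pos.2 hcη)
  have hh : ∀ Sig, h Sig = penalizedObjective c η S T Sig := fun Sig => by
    simp [h, penalizedObjective, traceSubLogDet]
  have hsub : ∀ Sig : Matrix (Fin m) (Fin m) ℝ, Sig.PosDef →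
      h Sig - h Sigstar = ((c + η) / 2) * (Sig⁻¹ * Sigstar).traceSubLogDet := fun Sig hSig => by
    rw [hh, hh]
    exact penalizedObjective_sub_eq hcη.ne' hSig.det_pos.ne' hT.det_pos.ne' hstar.det_pos.ne'
  refine ⟨hstar, fun Sig hSig => ?_, fun Sig hSig => ?_⟩
  · have := mul_nonneg (half_pos hcη).le (hSig.traceSubLogDet_inv_mul_nonneg hstar)
    linarith [hsub Sig hSig]
  · rw [← sub_eq_zero, hsub Sig hSig, mul_eq_zero, or_iff_right (half_pos hcη).ne',
      hSig.traceSubLogDet_inv_mul_eq_zero_iff hstar]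

/-- The penalized objective h(Σ) = (c/2)(log det Σ + tr(Σ⁻¹S)) +
(η/2)(tr(Σ⁻¹T) − log det(Σ⁻¹T) − m) with c, η > 0, S PSD, T SPD, is uniquely
minimized over SPD matrices at Σ* = (cS + ηT)/(c + η). -/
theorem penalized_objective_unique_minimizer
    (m : ℕ) (hm : 1 ≤ m) (c η : ℝ) (hc : 0 < c) (hη : 0 < η)
    (S T : Matrix (Fin m) (Fin m) ℝ) (hS : S.PosSemidef) (hT : T.PosDef) :
    let h : Matrix (Fin m) (Fin m) ℝ → ℝ := fun Sig =>
      (c / 2) * (Real.log Sig.det + (Sig⁻¹ * S).trace) +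
      (η / 2) * ((Sig⁻¹ * T).trace - Real.log (Sig⁻¹ * T).det - m)
    let Sigstar : Matrix (Fin m) (Fin m) ℝ := (c + η)⁻¹ • (c • S + η • T)
    Sigstar.PosDef ∧
    (∀ Sig : Matrix (Fin m) (Fin m) ℝ, Sig.PosDef → h Sigstar ≤ h Sig) ∧
    (∀ Sig : Matrix (Fin m) (Fin m) ℝ, Sig.PosDef →
      (h Sig = h Sigstar ↔ Sig = Sigstar)) :=
  penalized_objective_unique_minimizer_general m c η hc hη S T hS hT
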